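/- Let n be even, s ≥ 1, and 4s ≤ n. Then for every v ∈ V_{n,s}: q_{n,s}(v_{n,s} − w_{n,s} − v) ≥ n/4 and q_{n,s}(v_{n,s} − w_{n,s} − t_{n,s} − v) ≥ n/4. Consequently, every point of the coset w_{n,s} + V²_{n,s} is at squared q_{n,s}-distance at least n/4 from v_{n,s}. -/

import Mathlib

open Finset

noncomputable section

/-- The lattice `A_n = {x ∈ ℤ^{n+1} : Σ x_i = 0}`, viewed inside `ℝ^{n+1}`. -/
def latticeA (n : ℕ) : Set (Fin (n+1) → ℝ) :=
  {x | (∀ i, ∃ m : ℤ, x i = m) ∧ ∑ i, x i = 0}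

/-- The point lattice `V_{n,s} = {x ∈ ℤ^{n+1} : Σ x_i = s}`. -/
def Vset (n s : ℕ) : Set (Fin (n+1) → ℝ) :=
  {x | (∀ i, ∃ m : ℤ, x i = m) ∧ ∑ i, x i = (s : ℝ)}

/-- The vertex set `W(n+1,s) = {x ∈ {0,1}^{n+1} : Σ x_i = s}`. -/
def Wset (n s : ℕ) : Set (Fin (n+1) → ℝ) :=
  {x | (∀ i, x i = 0 ∨ x i = 1) ∧ ∑ i, x i = (s : ℝ)}

/-- The vector `v_{n,s} = ((1/4)^{4s}; 0^{n+1-4s})`. -/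
def vns (n s : ℕ) : Fin (n+1) → ℝ := fun i => if (i : ℕ) < 4 * s then 1 / 4 else 0

/-- The vector `t_{n,s} = ((1/2)^{2s}; (−1/2)^{2s}; 0^{n+1-4s})`. -/
def tns (n s : ℕ) : Fin (n+1) → ℝ := fun i =>
  if (i : ℕ) < 2 * s then 1 / 2 else if (i : ℕ) < 4 * s then -(1 / 2) else 0

/-- The point lattice `V²_{n,s} = V_{n,s} ∪ (t_{n,s} + V_{n,s})`. -/
def V2 (n s : ℕ) : Set (Fin (n+1) → ℝ) :=
  Vset n s ∪ (fun x => tns n s + x) '' Vset n s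

/-- The vertex set `S(n,s) = W(n+1,s) ∪ {2v_{n,s} − v : v ∈ W(n+1,s)}`
of the polytope `P(n,s)`. -/
def Sns (n s : ℕ) : Set (Fin (n+1) → ℝ) :=
  Wset n s ∪ (fun v => (2 : ℝ) • vns n s - v) '' Wset n s

/-- The quadratic form `q_{n,s}(x) = 2 Σ_{i<4s} x_i² + Σ_{i≥4s} x_i²`. -/
def qns (n s : ℕ) (x : Fin (n+1) → ℝ) : ℝ :=
  ∑ i : Fin (n+1), (if (i : ℕ) < 4 * s then (2:ℝ) else 1) * (x i) ^ 2

/-- The standard basis vector `e_1` (1 in coordinate index 1). -/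
def e1 (n : ℕ) : Fin (n+1) → ℝ := fun i => if (i : ℕ) = 1 then 1 else 0

/-- For `n` odd, the vector
`w_{n,s} = ((1/4)^{2s}; (−1/4)^{2s}; (1/2)^{n+1−4s}) − ((n+1−4s)/2)·e_1`. -/
def wOdd (n s : ℕ) : Fin (n+1) → ℝ := fun i =>
  (if (i : ℕ) < 2 * s then 1 / 4
   else if (i : ℕ) < 4 * s then -(1 / 4) else 1 / 2)
  - (((n : ℝ) + 1 - 4 * s) / 2) * e1 n i

/-- For `n` even, the vector
`w_{n,s} = ((1/4)^{2s}; (−1/4)^{2s}; 0; (1/2)^{n−4s}) − ((n−4s)/2)·e_1`. -/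
def wEven (n s : ℕ) : Fin (n+1) → ℝ := fun i =>
  (if (i : ℕ) < 2 * s then 1 / 4
   else if (i : ℕ) < 4 * s then -(1 / 4)
   else if (i : ℕ) = 4 * s then 0 else 1 / 2)
  - (((n : ℝ) - 4 * s) / 2) * e1 n i

/-!
On the middle block `[2s, 4s)` and on the tail `(4s, n]`, the coordinates of
`v_{n,s} - w_{n,s} - v` are half-integers; on the first block `[0, 2s)` and on the tail, so are
those of `v_{n,s} - w_{n,s} - t_{n,s} - v` (here `n` even makes the `e_1`-correction integral).
A half-integer has square at least `1/4`, and either family of blocks carries total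
`q_{n,s}`-weight `2 · 2s + (n - 4s) = n`.
-/

def IsHalfInteger (x : ℝ) : Prop := ∃ k : ℤ, x = k + 1 / 2

theorem IsHalfInteger.one_div_four_le_sq {x : ℝ} (hx : IsHalfInteger x) : 1 / 4 ≤ x ^ 2 := by
  obtain ⟨k, rfl⟩ := hx
  have hk : (0 : ℝ) ≤ k * (k + 1) := by
    exact_mod_cast Int.mul_nonneg_iff.2 (by omega)
  nlinarith

def blockFun (s : ℕ) (a b c d : ℝ) (k : ℕ) : ℝ :=
  if k < 2 * s then a else if k < 4 * s then b else if k = 4 * s then c else d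

theorem sum_range_blockFun {n s : ℕ} (h4s : 4 * s ≤ n) (a b c d : ℝ) :
    ∑ k ∈ range (n + 1), blockFun s a b c d k = 2 * s * a + 2 * s * b + c + (n - 4 * s) * d := by
  obtain ⟨m, rfl⟩ := Nat.exists_eq_add_of_le h4s
  have const_on {l : ℕ} {f : ℕ → ℝ} (e : ℝ) (h : ∀ k < l, f k = e) :
      ∑ k ∈ range l, f k = l * e := by
    rw [sum_congr rfl fun k hk => h k (mem_range.1 hk), sum_const, card_range, nsmul_eq_mul]
  rw [show 4 * s + m + 1 = 2 * s + 2 * s + 1 + m by ring, sum_range_add, sum_range_add,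
    sum_range_add, const_on a, const_on b, const_on c, const_on d]
  · push_cast
    ring
  all_goals
    intro k hk
    simp only [blockFun]
    split_ifs <;> first | rfl | omega

section

variable {n s : ℕ}

theorem sum_range_le_qns (x : Fin (n + 1) → ℝ) (g : ℕ → ℝ)
    (hg : ∀ i : Fin (n + 1), g i ≤ (if (i : ℕ) < 4 * s then 2 else 1) * x i ^ 2) :
    ∑ k ∈ range (n + 1), g k ≤ qns n s x := by
  rw [← Fin.sum_univ_eq_sum_range]
  exact sum_le_sum fun i _ => hg i

theorem div_four_le_qns_of_isHalfInteger_mid_high (h4s : 4 * s ≤ n) (x : Fin (n + 1) → ℝ)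
    (hmid : ∀ i : Fin (n + 1), 2 * s ≤ i → i < 4 * s → IsHalfInteger (x i))
    (hhigh : ∀ i : Fin (n + 1), 4 * s < i → IsHalfInteger (x i)) :
    (n : ℝ) / 4 ≤ qns n s x := by
  calc (n : ℝ) / 4 = ∑ k ∈ range (n + 1), blockFun s 0 (1 / 2) 0 (1 / 4) k := by
        rw [sum_range_blockFun h4s]; ring
    _ ≤ qns n s x := sum_range_le_qns x _ fun i => by
        simp only [blockFun]
        split_ifs <;> first
          | positivity
          | linarith [(hmid i (by omega) (by omega)).one_div_four_le_sq]
          | linarith [(hhigh i (by omega)).one_div_four_le_sq]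

theorem div_four_le_qns_of_isHalfInteger_low_high (h4s : 4 * s ≤ n) (x : Fin (n + 1) → ℝ)
    (hlow : ∀ i : Fin (n + 1), i < 2 * s → IsHalfInteger (x i))
    (hhigh : ∀ i : Fin (n + 1), 4 * s < i → IsHalfInteger (x i)) :
    (n : ℝ) / 4 ≤ qns n s x := by
  calc (n : ℝ) / 4 = ∑ k ∈ range (n + 1), blockFun s (1 / 2) 0 0 (1 / 4) k := by
        rw [sum_range_blockFun h4s]; ring
    _ ≤ qns n s x := sum_range_le_qns x _ fun i => by
        simp only [blockFun]
        split_ifs <;> first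
          | positivity
          | linarith [(hlow i (by omega)).one_div_four_le_sq]
          | linarith [(hhigh i (by omega)).one_div_four_le_sq]

theorem vns_sub_wEven_of_mid {i : Fin (n + 1)} (h1 : 2 * s ≤ i) (h2 : i < 4 * s) :
    vns n s i - wEven n s i = 1 / 2 := by
  simp only [vns, wEven, e1, if_pos h2, if_neg (not_lt.2 h1), if_neg (show (i : ℕ) ≠ 1 by omega)]
  norm_num

theorem vns_sub_wEven_of_high (hs : 1 ≤ s) {i : Fin (n + 1)} (h : 4 * s < i) :
    vns n s i - wEven n s i = -(1 / 2) := by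
  simp only [vns, wEven, e1, if_neg (show ¬(i : ℕ) < 4 * s by omega),
    if_neg (show ¬(i : ℕ) < 2 * s by omega), if_neg (show (i : ℕ) ≠ 4 * s by omega),
    if_neg (show (i : ℕ) ≠ 1 by omega)]
  norm_num

theorem exists_intCast_eq_vns_sub_wEven_of_low (heven : Even n) {i : Fin (n + 1)}
    (h : i < 2 * s) : ∃ k : ℤ, vns n s i - wEven n s i = k := by
  obtain ⟨r, hr⟩ := heven
  by_cases hi : (i : ℕ) = 1
  · refine ⟨r - 2 * s, ?_⟩
    simp only [vns, wEven, e1, if_pos (show (i : ℕ) < 4 * s by omega), if_pos h, if_pos hi, hr]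
    push_cast
    ring
  · refine ⟨0, ?_⟩
    simp only [vns, wEven, e1, if_pos (show (i : ℕ) < 4 * s by omega), if_pos h, if_neg hi]
    norm_num

theorem tns_of_low {i : Fin (n + 1)} (h : i < 2 * s) : tns n s i = 1 / 2 := if_pos h

theorem tns_of_high {i : Fin (n + 1)} (h : 4 * s < i) : tns n s i = 0 := by
  simp only [tns, if_neg (show ¬(i : ℕ) < 2 * s by omega), if_neg (show ¬(i : ℕ) < 4 * s by omega)]

theorem div_four_le_qns_vns_sub_wEven_sub (hs : 1 ≤ s) (h4s : 4 * s ≤ n)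
    {v : Fin (n + 1) → ℝ} (hv : v ∈ Vset n s) :
    (n : ℝ) / 4 ≤ qns n s (vns n s - wEven n s - v) := by
  refine div_four_le_qns_of_isHalfInteger_mid_high h4s _ (fun i h1 h2 => ?_) fun i h => ?_
  · obtain ⟨m, hm⟩ := hv.1 i
    exact ⟨-m, by simp only [Pi.sub_apply, vns_sub_wEven_of_mid h1 h2, hm]; push_cast; ring⟩
  · obtain ⟨m, hm⟩ := hv.1 i
    exact ⟨-m - 1, by simp only [Pi.sub_apply, vns_sub_wEven_of_high hs h, hm]; push_cast; ring⟩

theorem div_four_le_qns_vns_sub_wEven_sub_tns_sub (heven : Even n) (hs : 1 ≤ s)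
    (h4s : 4 * s ≤ n) {v : Fin (n + 1) → ℝ} (hv : v ∈ Vset n s) :
    (n : ℝ) / 4 ≤ qns n s (vns n s - wEven n s - tns n s - v) := by
  refine div_four_le_qns_of_isHalfInteger_low_high h4s _ (fun i h => ?_) fun i h => ?_
  · obtain ⟨m, hm⟩ := hv.1 i
    obtain ⟨k, hk⟩ := exists_intCast_eq_vns_sub_wEven_of_low heven h
    exact ⟨k - m - 1, by simp only [Pi.sub_apply, hk, tns_of_low h, hm]; push_cast; ring⟩
  · obtain ⟨m, hm⟩ := hv.1 i
    exact ⟨-m - 1, by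
      simp only [Pi.sub_apply, vns_sub_wEven_of_high hs h, tns_of_high h, hm]; push_cast; ring⟩

end

/-- For `n` even, every point of the coset `w_{n,s} + V²_{n,s}` is at squared
`q_{n,s}`-distance at least `n/4` from `v_{n,s}`. -/
theorem coset_far_even (n s : ℕ) (heven : Even n) (hs : 1 ≤ s) (h4s : 4 * s ≤ n) :
    (∀ v ∈ Vset n s,
      (n : ℝ) / 4 ≤ qns n s (vns n s - wEven n s - v) ∧
      (n : ℝ) / 4 ≤ qns n s (vns n s - wEven n s - tns n s - v)) ∧
    (∀ u ∈ V2 n s, (n : ℝ) / 4 ≤ qns n s (vns n s - (wEven n s + u))) := by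
  refine ⟨fun v hv => ⟨div_four_le_qns_vns_sub_wEven_sub hs h4s hv,
    div_four_le_qns_vns_sub_wEven_sub_tns_sub heven hs h4s hv⟩, ?_⟩
  rintro u (hu | ⟨v, hv, rfl⟩)
  · simpa only [sub_add_eq_sub_sub] using div_four_le_qns_vns_sub_wEven_sub hs h4s hu
  · simpa only [sub_add_eq_sub_sub] using
      div_four_le_qns_vns_sub_wEven_sub_tns_sub heven hs h4s hv
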